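/- arXiv:2004.10821 — 7 statements merged into one kernel-verified Lean document; each statement's English description precedes it below -/
import Mathlib

section
/- A subspace D ⊆ ℝⁿ × ℝⁿ is a Dirac structure if, and only if, there exist matrices K, L ∈ ℝ^{n×n} with K·Lᵀ + L·Kᵀ = 0 and rank [K L] = n (the n×2n block matrix), such that D = {(f,e) ∈ ℝⁿ × ℝⁿ | K·f + L·e = 0}. -/
open Matrix
/-- A set `D ⊆ ℝⁿ × ℝⁿ` is a Dirac structure if membership in `D` is equivalent to
being "orthogonal" to all of `D` with respect to the power pairing `eᵀf̂ + êᵀf`. -/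
def IsDirac {ι : Type} [Fintype ι] (D : Set ((ι → ℝ) × (ι → ℝ))) : Prop :=
  ∀ p : (ι → ℝ) × (ι → ℝ), p ∈ D ↔ ∀ q ∈ D, p.2 ⬝ᵥ q.1 + q.2 ⬝ᵥ p.1 = 0

/-!
For `K L : Matrix κ ι ℝ`, the kernel map `(f, e) ↦ K f + L e` is the adjoint, for the power
pairing, of the image map `λ ↦ (Lᵀ λ, Kᵀ λ)`. Hence `ker [K L]` is the orthogonal of
`im [Lᵀ; Kᵀ]`, a space of dimension `rank [K L]`, and `K Lᵀ + L Kᵀ = 0` says exactly that the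
image lies in the kernel. A Dirac structure `D = D^⊥` has dimension `n`; writing it as the image
of some `[Lᵀ; Kᵀ]` yields a kernel representation. Conversely, if `rank [K L] = n` then image
and kernel both have dimension `n`, so the image is `D` and `D = (im)^⊥ = D^⊥`.
-/

open Module LinearMap

namespace Dirac

variable {ι : Type} {κ : Type*}

section

variable [Fintype κ]

noncomputable def imageMap (K L : Matrix κ ι ℝ) : (κ → ℝ) →ₗ[ℝ] (ι → ℝ) × (ι → ℝ) :=
  Lᵀ.mulVecLin.prod Kᵀ.mulVecLin

@[simp]
lemma imageMap_apply (K L : Matrix κ ι ℝ) (l : κ → ℝ) :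
    imageMap K L l = (Lᵀ *ᵥ l, Kᵀ *ᵥ l) := rfl

lemma exists_imageMap_eq [DecidableEq κ] (f : (κ → ℝ) →ₗ[ℝ] (ι → ℝ) × (ι → ℝ)) :
    ∃ K L : Matrix κ ι ℝ, imageMap K L = f := by
  refine ⟨(toMatrix' (snd ℝ _ _ ∘ₗ f))ᵀ, (toMatrix' (fst ℝ _ _ ∘ₗ f))ᵀ, ?_⟩
  refine LinearMap.ext fun l => ?_
  simp only [imageMap_apply, transpose_transpose, toMatrix'_mulVec]
  rfl

end

variable [Fintype ι]

noncomputable def kernelMap (K L : Matrix κ ι ℝ) : (ι → ℝ) × (ι → ℝ) →ₗ[ℝ] κ → ℝ :=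
  K.mulVecLin.coprod L.mulVecLin

@[simp]
lemma kernelMap_apply (K L : Matrix κ ι ℝ) (p : (ι → ℝ) × (ι → ℝ)) :
    kernelMap K L p = K *ᵥ p.1 + L *ᵥ p.2 := rfl

variable (ι) in
noncomputable def powerPairing : LinearMap.BilinForm ℝ ((ι → ℝ) × (ι → ℝ)) :=
  LinearMap.mk₂ ℝ (fun p q => p.2 ⬝ᵥ q.1 + q.2 ⬝ᵥ p.1)
    (fun p p' q => by simp only [Prod.fst_add, Prod.snd_add, add_dotProduct, dotProduct_add]; ring)
    (fun c p q => by simp only [Prod.smul_fst, Prod.smul_snd, smul_dotProduct, dotProduct_smul,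
        smul_eq_mul]; ring)
    (fun p q q' => by simp only [Prod.fst_add, Prod.snd_add, add_dotProduct, dotProduct_add]; ring)
    (fun c p q => by simp only [Prod.smul_fst, Prod.smul_snd, smul_dotProduct, dotProduct_smul,
        smul_eq_mul]; ring)

@[simp]
lemma powerPairing_apply (p q : (ι → ℝ) × (ι → ℝ)) :
    powerPairing ι p q = p.2 ⬝ᵥ q.1 + q.2 ⬝ᵥ p.1 := rfl

lemma powerPairing_nondegenerate : (powerPairing ι).Nondegenerate := by
  refine LinearMap.BilinForm.Nondegenerate.ofSeparatingLeft fun p hp => ?_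
  -- pairing `p` with its swap gives `p.1 ⬝ᵥ p.1 + p.2 ⬝ᵥ p.2`
  have h := hp (p.2, p.1)
  rw [powerPairing_apply] at h
  have h₁ : 0 ≤ p.1 ⬝ᵥ p.1 := by simpa using dotProduct_star_self_nonneg p.1
  have h₂ : 0 ≤ p.2 ⬝ᵥ p.2 := by simpa using dotProduct_star_self_nonneg p.2
  exact Prod.ext (dotProduct_self_eq_zero.1 (by linarith)) (dotProduct_self_eq_zero.1 (by linarith))

lemma isDirac_iff_eq_orthogonal (D : Submodule ℝ ((ι → ℝ) × (ι → ℝ))) :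
    IsDirac (D : Set ((ι → ℝ) × (ι → ℝ))) ↔ D = (powerPairing ι).orthogonal D := by
  simp only [IsDirac, SetLike.ext_iff, SetLike.mem_coe, LinearMap.BilinForm.mem_orthogonal_iff,
    powerPairing_apply, add_comm]

lemma finrank_prod_self : finrank ℝ ((ι → ℝ) × (ι → ℝ)) = 2 * Fintype.card ι := by
  rw [Module.finrank_prod, Module.finrank_fintype_fun_eq_card]; ring

lemma finrank_orthogonal_powerPairing (W : Submodule ℝ ((ι → ℝ) × (ι → ℝ))) :
    finrank ℝ ((powerPairing ι).orthogonal W) = 2 * Fintype.card ι - finrank ℝ W := by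
  rw [LinearMap.BilinForm.finrank_orthogonal powerPairing_nondegenerate, finrank_prod_self]

lemma finrank_eq_card_of_eq_orthogonal {D : Submodule ℝ ((ι → ℝ) × (ι → ℝ))}
    (hD : D = (powerPairing ι).orthogonal D) : finrank ℝ D = Fintype.card ι := by
  have h := finrank_orthogonal_powerPairing D
  have h₂ := D.finrank_le
  rw [← hD] at h
  rw [finrank_prod_self] at h₂
  omega

variable [Fintype κ]

lemma powerPairing_imageMap (K L : Matrix κ ι ℝ) (l : κ → ℝ) (p : (ι → ℝ) × (ι → ℝ)) :
    powerPairing ι (imageMap K L l) p = l ⬝ᵥ kernelMap K L p := by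
  simp only [powerPairing_apply, imageMap_apply, kernelMap_apply, dotProduct_add,
    mulVec_transpose, dotProduct_mulVec, dotProduct_comm p.2]

lemma ker_kernelMap (K L : Matrix κ ι ℝ) :
    ker (kernelMap K L) = (powerPairing ι).orthogonal (range (imageMap K L)) := by
  ext p
  simp only [mem_ker, LinearMap.BilinForm.mem_orthogonal_iff, mem_range, forall_exists_index,
    forall_apply_eq_imp_iff, powerPairing_imageMap,
    dotProduct_comm _ (kernelMap K L p), dotProduct_eq_zero_iff]

lemma kernelMap_imageMap (K L : Matrix κ ι ℝ) (l : κ → ℝ) :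
    kernelMap K L (imageMap K L l) = (K * Lᵀ + L * Kᵀ) *ᵥ l := by
  rw [kernelMap_apply, imageMap_apply, add_mulVec, mulVec_mulVec, mulVec_mulVec]

lemma range_imageMap_le_ker_kernelMap_iff (K L : Matrix κ ι ℝ) :
    range (imageMap K L) ≤ ker (kernelMap K L) ↔ K * Lᵀ + L * Kᵀ = 0 := by
  simp only [range_le_ker_iff, LinearMap.ext_iff, LinearMap.comp_apply, kernelMap_imageMap,
    LinearMap.zero_apply]
  exact ⟨fun h => mulVec_injective (funext fun l => (h l).trans (zero_mulVec l).symm),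
    fun h l => by rw [h, zero_mulVec]⟩

lemma finrank_range_imageMap (K L : Matrix κ ι ℝ) :
    finrank ℝ (range (imageMap K L)) = (fromCols K L).rank := by
  have h : imageMap K L = ((LinearEquiv.sumArrowLequivProdArrow ι ι ℝ ℝ).trans
      (LinearEquiv.prodComm ℝ _ _)).toLinearMap ∘ₗ (fromRows Kᵀ Lᵀ).mulVecLin := by
    ext l : 1
    simp [fromRows_mulVec, LinearEquiv.sumArrowLequivProdArrow, Equiv.sumArrowEquivProdArrow]
  rw [h, range_comp, LinearEquiv.finrank_map_eq, ← Matrix.rank, ← transpose_fromCols,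
    rank_transpose]

lemma finrank_ker_kernelMap (K L : Matrix κ ι ℝ) :
    finrank ℝ (ker (kernelMap K L)) = 2 * Fintype.card ι - (fromCols K L).rank := by
  rw [ker_kernelMap, finrank_orthogonal_powerPairing, finrank_range_imageMap]

lemma exists_range_imageMap_eq (W : Submodule ℝ ((ι → ℝ) × (ι → ℝ)))
    (hW : finrank ℝ W = Fintype.card κ) : ∃ K L : Matrix κ ι ℝ, range (imageMap K L) = W := by
  classical
  let e : (κ → ℝ) ≃ₗ[ℝ] W := LinearEquiv.ofFinrankEq _ _ (by rw [hW, finrank_fintype_fun_eq_card])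
  obtain ⟨K, L, hKL⟩ := exists_imageMap_eq (W.subtype ∘ₗ e.toLinearMap)
  exact ⟨K, L, by rw [hKL, range_comp, e.range, Submodule.map_top, Submodule.range_subtype]⟩

end Dirac

open Dirac in
/-- A subspace `D ⊆ ℝⁿ × ℝⁿ` is a Dirac structure iff there are `K, L ∈ ℝ^{n×n}` with
`K Lᵀ + L Kᵀ = 0` and `rank [K L] = n` such that `D = {(f,e) | K f + L e = 0}`. -/
theorem dirac_iff_kernel_representation (n : ℕ)
    (D : Submodule ℝ ((Fin n → ℝ) × (Fin n → ℝ))) :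
    IsDirac (D : Set ((Fin n → ℝ) × (Fin n → ℝ))) ↔
      ∃ K L : Matrix (Fin n) (Fin n) ℝ,
        K * L.transpose + L * K.transpose = 0 ∧
        (Matrix.fromCols K L).rank = n ∧
        (D : Set ((Fin n → ℝ) × (Fin n → ℝ))) =
          {p : (Fin n → ℝ) × (Fin n → ℝ) | K.mulVec p.1 + L.mulVec p.2 = 0} := by
  rw [isDirac_iff_eq_orthogonal]
  constructor
  · intro hD
    have hdim := finrank_eq_card_of_eq_orthogonal hD
    obtain ⟨K, L, hS⟩ := exists_range_imageMap_eq (κ := Fin n) D hdim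
    have hT : ker (kernelMap K L) = D := by rw [ker_kernelMap, hS, ← hD]
    refine ⟨K, L, ?_, ?_, ?_⟩
    · exact (range_imageMap_le_ker_kernelMap_iff K L).1 (by rw [hS, hT])
    · rw [← finrank_range_imageMap, hS, hdim, Fintype.card_fin]
    · rw [← hT]
      rfl
  · rintro ⟨K, L, hKL, hrank, hD⟩
    have hT : D = ker (kernelMap K L) := SetLike.coe_injective hD
    have hS : range (imageMap K L) = D := by
      refine Submodule.eq_of_le_of_finrank_eq ?_ ?_
      · rw [hT]
        exact (range_imageMap_le_ker_kernelMap_iff K L).2 hKL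
      · rw [finrank_range_imageMap, hT, finrank_ker_kernelMap, hrank, Fintype.card_fin]
        omega
    calc D = ker (kernelMap K L) := hT
      _ = (powerPairing _).orthogonal D := by rw [ker_kernelMap, hS]
end

section
/- A subspace L ⊆ ℝⁿ × ℝⁿ is a Lagrangian subspace if, and only if, there exist matrices S, P ∈ ℝ^{n×n} with Sᵀ·P = Pᵀ·S and rank [Sᵀ Pᵀ] = n (the n×2n block matrix), such that L = {(f,e) ∈ ℝⁿ × ℝⁿ | Sᵀ·f = Pᵀ·e}. -/
open Matrix

/-- A set `L ⊆ ℝⁿ × ℝⁿ` is a Lagrangian subspace if membership in `L` is equivalent to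
being "orthogonal" to all of `L` with respect to the symplectic pairing `v₁ᵀw₂ − v₂ᵀw₁`. -/
def IsLagrangian {ι : Type} [Fintype ι] (L : Set ((ι → ℝ) × (ι → ℝ))) : Prop :=
  ∀ p : (ι → ℝ) × (ι → ℝ), p ∈ L ↔ ∀ q ∈ L, p.1 ⬝ᵥ q.2 - p.2 ⬝ᵥ q.1 = 0

/-!
For the symplectic form `ω ((f, e), (f', e')) = f ⬝ᵥ e' - e ⬝ᵥ f'`, the set
`{(f, e) | Sᵀ f = Pᵀ e}` is the `ω`-orthogonal of the range `W` of `x ↦ (P x, S x)`.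
The condition `Sᵀ P = Pᵀ S` says that `W` is isotropic, and `rank [Sᵀ Pᵀ] = n` says that
`x ↦ (P x, S x)` is injective, i.e. `dim W = n`. As `ω` is nondegenerate,
`dim W^ω = 2n - dim W`, so an isotropic `W` of dimension `n` equals `W^ω`, and `L = W^ω = W`
is Lagrangian. Conversely a Lagrangian `L = L^ω` has dimension `n`, and parametrising it
injectively as the range of some `x ↦ (P x, S x)` produces the matrices.
-/

open LinearMap Module

namespace LinearMap.BilinForm

variable {K V : Type*} [Field K] [AddCommGroup V] [Module K V] [FiniteDimensional K V]
  {B : LinearMap.BilinForm K V} {W : Submodule K V}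

theorem two_mul_finrank_eq_of_orthogonal_eq_self (hB : B.Nondegenerate)
    (hW : B.orthogonal W = W) : 2 * finrank K W = finrank K V := by
  have h := finrank_orthogonal hB W
  rw [hW] at h
  have := W.finrank_le
  omega

theorem orthogonal_eq_self_of_le_of_two_mul_finrank_eq (hB : B.Nondegenerate)
    (hle : W ≤ B.orthogonal W) (hW : 2 * finrank K W = finrank K V) : B.orthogonal W = W :=
  (Submodule.eq_of_le_of_finrank_eq hle (by rw [finrank_orthogonal hB]; omega)).symm

end LinearMap.BilinForm

theorem Submodule.exists_injective_range_eq {K V : Type*} [DivisionRing K] [AddCommGroup V]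
    [Module K V] {W : Submodule K V} [FiniteDimensional K W] {n : ℕ} (hW : finrank K W = n) :
    ∃ f : (Fin n → K) →ₗ[K] V, Function.Injective f ∧ range f = W :=
  let e := (Module.finBasisOfFinrankEq K W hW).equivFun.symm
  ⟨W.subtype ∘ₗ e, W.injective_subtype.comp e.injective,
    by rw [range_comp_of_range_eq_top _ e.range, Submodule.range_subtype]⟩

section Symplectic

variable {K : Type*} [CommRing K] {ι : Type*} [Fintype ι]

variable (K ι) in
noncomputable def symplecticForm : LinearMap.BilinForm K ((ι → K) × (ι → K)) :=
  LinearMap.mk₂ K (fun p q => p.1 ⬝ᵥ q.2 - p.2 ⬝ᵥ q.1)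
    (fun p p' q => by simp only [Prod.fst_add, Prod.snd_add, add_dotProduct]; ring)
    (fun c p q => by simp only [Prod.smul_fst, Prod.smul_snd, smul_dotProduct, smul_sub])
    (fun p q q' => by simp only [Prod.fst_add, Prod.snd_add, dotProduct_add]; ring)
    (fun c p q => by simp only [Prod.smul_fst, Prod.smul_snd, dotProduct_smul, smul_sub])

theorem symplecticForm_apply (p q : (ι → K) × (ι → K)) :
    symplecticForm K ι p q = p.1 ⬝ᵥ q.2 - p.2 ⬝ᵥ q.1 :=
  rfl

theorem symplecticForm_swap (p q : (ι → K) × (ι → K)) :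
    symplecticForm K ι q p = -symplecticForm K ι p q := by
  simp only [symplecticForm_apply, dotProduct_comm q.1, dotProduct_comm q.2, neg_sub]

theorem symplecticForm_nondegenerate : (symplecticForm K ι).Nondegenerate := by
  classical
  have hrefl : (symplecticForm K ι).IsRefl := fun p q h => by
    rw [symplecticForm_swap, h, neg_zero]
  refine hrefl.nondegenerate_iff_separatingLeft.2 fun p hp =>
    Prod.ext (funext fun i => ?_) (funext fun i => ?_)
  · simpa [symplecticForm_apply] using hp (0, Pi.single i 1)
  · simpa [symplecticForm_apply] using hp (Pi.single i 1, 0)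

end Symplectic

section ImageRepresentation

variable {K : Type*} [CommRing K] {ι κ : Type*} [Fintype κ]

noncomputable def imageRepresentation (S P : Matrix ι κ K) : (κ → K) →ₗ[K] (ι → K) × (ι → K) :=
  P.mulVecLin.prod S.mulVecLin

variable {S P : Matrix ι κ K}

theorem imageRepresentation_apply (x : κ → K) : imageRepresentation S P x = (P *ᵥ x, S *ᵥ x) :=
  rfl

theorem imageRepresentation_toMatrix' [DecidableEq κ] (f : (κ → K) →ₗ[K] (ι → K) × (ι → K)) :
    imageRepresentation (toMatrix' (snd K _ _ ∘ₗ f)) (toMatrix' (fst K _ _ ∘ₗ f)) = f := by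
  rw [imageRepresentation, ← toLin'_apply', ← toLin'_apply', toLin'_toMatrix', toLin'_toMatrix',
    ← prod_comp, pair_fst_snd, id_comp]

theorem symplecticForm_imageRepresentation [Fintype ι] (x : κ → K) (p : (ι → K) × (ι → K)) :
    symplecticForm K ι (imageRepresentation S P x) p = (Pᵀ *ᵥ p.2 - Sᵀ *ᵥ p.1) ⬝ᵥ x := by
  rw [imageRepresentation_apply, symplecticForm_apply, sub_dotProduct, mulVec_transpose,
    mulVec_transpose, dotProduct_comm (P *ᵥ x), dotProduct_comm (S *ᵥ x), dotProduct_mulVec,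
    dotProduct_mulVec]

theorem mem_orthogonal_range_imageRepresentation [Fintype ι] {p : (ι → K) × (ι → K)} :
    p ∈ (symplecticForm K ι).orthogonal (range (imageRepresentation S P)) ↔
      Sᵀ *ᵥ p.1 = Pᵀ *ᵥ p.2 := by
  simp only [BilinForm.mem_orthogonal_iff, mem_range, forall_exists_index, forall_apply_eq_imp_iff,
    symplecticForm_imageRepresentation]
  rw [dotProduct_eq_zero_iff, sub_eq_zero, eq_comm]

theorem range_imageRepresentation_le_orthogonal_iff [Fintype ι] :
    range (imageRepresentation S P) ≤
        (symplecticForm K ι).orthogonal (range (imageRepresentation S P)) ↔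
      Sᵀ * P = Pᵀ * S := by
  simp only [ext_iff_mulVec, ← mulVec_mulVec, range_le_iff_comap, Submodule.eq_top_iff',
    Submodule.mem_comap, mem_orthogonal_range_imageRepresentation, imageRepresentation_apply]

theorem ker_fromRows_mulVecLin :
    ker (fromRows S P).mulVecLin = ker (imageRepresentation S P) := by
  ext x
  simp only [mem_ker, mulVecLin_apply, fromRows_mulVec, imageRepresentation_apply,
    Prod.mk_eq_zero, ← Sum.elim_zero_zero, Sum.elim_eq_iff, and_comm]

end ImageRepresentation

theorem rank_fromCols_transpose_eq_card_iff {K : Type*} [Field K] {ι κ : Type*} [Fintype ι]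
    [Fintype κ] {S P : Matrix ι κ K} :
    (fromCols Sᵀ Pᵀ).rank = Fintype.card κ ↔ Function.Injective (imageRepresentation S P) := by
  have hnullity := (fromRows S P).mulVecLin.finrank_range_add_finrank_ker
  rw [finrank_fintype_fun_eq_card, ker_fromRows_mulVecLin] at hnullity
  rw [← rank_transpose, transpose_fromCols, transpose_transpose, transpose_transpose, Matrix.rank,
    ← ker_eq_bot, ← Submodule.finrank_eq_zero]
  omega

theorem isLagrangian_iff_orthogonal_eq_self {ι : Type} [Fintype ι]
    (L : Submodule ℝ ((ι → ℝ) × (ι → ℝ))) :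
    IsLagrangian (L : Set ((ι → ℝ) × (ι → ℝ))) ↔ (symplecticForm ℝ ι).orthogonal L = L := by
  rw [IsLagrangian, SetLike.ext_iff]
  refine forall_congr' fun p => ?_
  have hswap (q : (ι → ℝ) × (ι → ℝ)) :
      symplecticForm ℝ ι q p = 0 ↔ p.1 ⬝ᵥ q.2 - p.2 ⬝ᵥ q.1 = 0 := by
    rw [symplecticForm_swap, neg_eq_zero, symplecticForm_apply]
  simp only [SetLike.mem_coe, BilinForm.mem_orthogonal_iff, hswap]
  exact iff_comm

/-- A subspace `L ⊆ ℝⁿ × ℝⁿ` is Lagrangian iff there are `S, P ∈ ℝ^{n×n}` with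
`Sᵀ P = Pᵀ S` and `rank [Sᵀ Pᵀ] = n` such that `L = {(f,e) | Sᵀ f = Pᵀ e}`. -/
theorem lagrangian_iff_kernel_representation (n : ℕ)
    (L : Submodule ℝ ((Fin n → ℝ) × (Fin n → ℝ))) :
    IsLagrangian (L : Set ((Fin n → ℝ) × (Fin n → ℝ))) ↔
      ∃ S P : Matrix (Fin n) (Fin n) ℝ,
        S.transpose * P = P.transpose * S ∧
        (Matrix.fromCols S.transpose P.transpose).rank = n ∧
        (L : Set ((Fin n → ℝ) × (Fin n → ℝ))) =
          {p : (Fin n → ℝ) × (Fin n → ℝ) |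
            S.transpose.mulVec p.1 = P.transpose.mulVec p.2} := by
  have hdim : finrank ℝ ((Fin n → ℝ) × (Fin n → ℝ)) = 2 * n := by
    rw [finrank_prod, finrank_fin_fun, two_mul]
  rw [isLagrangian_iff_orthogonal_eq_self]
  constructor
  · intro hL
    have hn : finrank ℝ L = n := by
      have := BilinForm.two_mul_finrank_eq_of_orthogonal_eq_self symplecticForm_nondegenerate hL
      omega
    obtain ⟨f, hf_inj, hf_range⟩ := Submodule.exists_injective_range_eq hn
    obtain ⟨S, P, rfl⟩ : ∃ S P, imageRepresentation S P = f :=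
      ⟨_, _, imageRepresentation_toMatrix' f⟩
    refine ⟨S, P, range_imageRepresentation_le_orthogonal_iff.1 (hf_range ▸ hL.ge),
      by simpa using rank_fromCols_transpose_eq_card_iff.2 hf_inj, ?_⟩
    ext p
    rw [SetLike.mem_coe, ← hL, ← hf_range, mem_orthogonal_range_imageRepresentation,
      Set.mem_ofPred_eq]
  · rintro ⟨S, P, hSP, hrank, hker⟩
    have hL : L = (symplecticForm ℝ (Fin n)).orthogonal (range (imageRepresentation S P)) :=
      SetLike.coe_injective <|
        hker.trans (Set.ext fun _ => mem_orthogonal_range_imageRepresentation.symm)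
    have hW := BilinForm.orthogonal_eq_self_of_le_of_two_mul_finrank_eq
      symplecticForm_nondegenerate (range_imageRepresentation_le_orthogonal_iff.2 hSP)
      (by rw [finrank_range_of_inj (rank_fromCols_transpose_eq_card_iff.1 (by simpa using hrank)),
        finrank_fin_fun, hdim])
    rw [hL, hW, hW]
end

section
/- Let ℓ, n₁, n₂ ∈ ℕ, let D₁ ⊆ (ℝ^{n₁} × ℝ^ℓ) × (ℝ^{n₁} × ℝ^ℓ) and D₂ ⊆ (ℝ^{n₂} × ℝ^ℓ) × (ℝ^{n₂} × ℝ^ℓ) be Dirac structures (with flow components (f₁, f_link) resp. (f₂, f_link) and effort components (e₁, e_link) resp. (e₂, e_link)). Then the composition D := {((f₁,f₂),(e₁,e₂)) ∈ ℝ^{n₁+n₂} × ℝ^{n₁+n₂} | ∃ (f_link, e_link) ∈ ℝ^ℓ × ℝ^ℓ such that (f₁, f_link, e₁, e_link) ∈ D₁ and (f₂, −f_link, e₂, e_link) ∈ D₂} is a Dirac structure in ℝ^{n₁+n₂} × ℝ^{n₁+n₂}. -/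
/-!
A Dirac structure is a Lagrangian subspace (one equal to its own orthogonal) for the power
pairing. Splitting off the link ports, `D₁ × D₂` is Lagrangian in the product space, and the
composition is the image of `(D₁ × D₂) ∩ C` under the projection forgetting the link ports,
where `C` imposes `f_link' = -f_link`, `e_link' = e_link`. Because the sign flip is an
anti-isometry of the link pairing, `C^⊥` consists of pure link vectors satisfying the same
constraint, so `C^⊥ ⊆ C` and the projection kills `C^⊥`. Lagrangian subspaces survive such a
linear reduction: lift a vector `u ⊥ π(W ∩ C)` to `v ∈ C`; by nondegeneracy in finite dimension
`v ∈ (W ∩ C)^⊥ = W + C^⊥`, and the `W`-part of `v` lies in `W ∩ C` and projects to `u`.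
-/

open Matrix

open LinearMap (BilinForm)

namespace LinearMap.BilinForm

section CommRing

variable {R M N : Type*} [CommRing R] [AddCommGroup M] [Module R M] [AddCommGroup N] [Module R N]
  {B : BilinForm R M} {B₁ : BilinForm R M} {B₂ : BilinForm R N}

def prod (B₁ : BilinForm R M) (B₂ : BilinForm R N) : BilinForm R (M × N) :=
  B₁.compl₁₂ (LinearMap.fst R M N) (LinearMap.fst R M N) +
    B₂.compl₁₂ (LinearMap.snd R M N) (LinearMap.snd R M N)

@[simp]
theorem prod_apply (B₁ : BilinForm R M) (B₂ : BilinForm R N) (x y : M × N) :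
    B₁.prod B₂ x y = B₁ x.1 y.1 + B₂ x.2 y.2 := rfl

theorem IsSymm.prod (h₁ : B₁.IsSymm) (h₂ : B₂.IsSymm) : (B₁.prod B₂).IsSymm :=
  ⟨fun x y => by simp only [prod_apply, h₁.eq x.1, h₂.eq x.2]⟩

theorem Nondegenerate.prod (h₁ : B₁.Nondegenerate) (h₂ : B₂.Nondegenerate) :
    (B₁.prod B₂).Nondegenerate :=
  ⟨fun x hx => Prod.ext (h₁.1 x.1 fun y => by simpa using hx (y, 0))
      (h₂.1 x.2 fun y => by simpa using hx (0, y)),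
    fun y hy => Prod.ext (h₁.2 y.1 fun x => by simpa using hy (x, 0))
      (h₂.2 y.2 fun x => by simpa using hy (0, x))⟩

theorem orthogonal_prod (W₁ : Submodule R M) (W₂ : Submodule R N) :
    (B₁.prod B₂).orthogonal (W₁.prod W₂) = (B₁.orthogonal W₁).prod (B₂.orthogonal W₂) := by
  ext x
  simp only [mem_orthogonal_iff, Submodule.mem_prod, prod_apply, Prod.forall]
  refine ⟨fun h => ⟨fun y hy => by simpa using h y 0 ⟨hy, zero_mem _⟩,
    fun y hy => by simpa using h 0 y ⟨zero_mem _, hy⟩⟩, ?_⟩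
  rintro ⟨hx₁, hx₂⟩ y₁ y₂ ⟨hy₁, hy₂⟩
  rw [hx₁ y₁ hy₁, hx₂ y₂ hy₂, add_zero]

theorem orthogonal_sup (W C : Submodule R M) :
    B.orthogonal (W ⊔ C) = B.orthogonal W ⊓ B.orthogonal C := by
  ext x
  simp only [mem_orthogonal_iff, Submodule.mem_inf]
  refine ⟨fun h => ⟨fun w hw => h w (Submodule.mem_sup_left hw),
    fun c hc => h c (Submodule.mem_sup_right hc)⟩, ?_⟩
  rintro ⟨hW, hC⟩ _ hy
  obtain ⟨w, hw, c, hc, rfl⟩ := Submodule.mem_sup.1 hy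
  rw [map_add, LinearMap.add_apply, hW w hw, hC c hc, add_zero]

theorem mem_orthogonal_span_iff {s : Set M} {x : M} :
    x ∈ B.orthogonal (Submodule.span R s) ↔ ∀ y ∈ s, B y x = 0 :=
  ⟨fun h y hy => h y (Submodule.subset_span hy),
    fun h _ hy => (Submodule.span_le (p := LinearMap.ker (B.flip x))).2 h hy⟩

def IsLagrangian (B : BilinForm R M) (W : Submodule R M) : Prop :=
  B.orthogonal W = W

theorem IsLagrangian.prod {W₁ : Submodule R M} {W₂ : Submodule R N}
    (h₁ : B₁.IsLagrangian W₁) (h₂ : B₂.IsLagrangian W₂) :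
    (B₁.prod B₂).IsLagrangian (W₁.prod W₂) := by
  rw [IsLagrangian, orthogonal_prod, h₁, h₂]

theorem IsLagrangian.comap {W : Submodule R N} (hW : B₂.IsLagrangian W) (e : M ≃ₗ[R] N)
    (he : ∀ x y, B₂ (e x) (e y) = B₁ x y) : B₁.IsLagrangian (W.comap e.toLinearMap) := by
  ext x
  simp only [mem_orthogonal_iff, Submodule.mem_comap, LinearEquiv.coe_coe]
  conv_rhs => rw [← hW, mem_orthogonal_iff]
  refine ⟨fun h y hy => ?_, fun h y hy => by rw [← he, h _ hy]⟩
  rw [← e.apply_symm_apply y, he]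
  exact h _ (by simpa using hy)

theorem IsLagrangian.map {W : Submodule R M} (hW : B₁.IsLagrangian W) (e : M ≃ₗ[R] N)
    (he : ∀ x y, B₂ (e x) (e y) = B₁ x y) : B₂.IsLagrangian (W.map e.toLinearMap) := by
  rw [Submodule.map_equiv_eq_comap_symm]
  exact hW.comap e.symm fun x y => by rw [← he, e.apply_symm_apply, e.apply_symm_apply]

end CommRing

section Field

variable {K V U : Type*} [Field K] [AddCommGroup V] [Module K V] [FiniteDimensional K V]
  [AddCommGroup U] [Module K U] {B : BilinForm K V}

theorem orthogonal_inf (hB : B.Nondegenerate) (hB' : B.IsRefl) (W C : Submodule K V) :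
    B.orthogonal (W ⊓ C) = B.orthogonal W ⊔ B.orthogonal C := by
  rw [← orthogonal_orthogonal hB hB' (_ ⊔ _), orthogonal_sup,
    orthogonal_orthogonal hB hB', orthogonal_orthogonal hB hB']

theorem IsLagrangian.map_inf {B' : BilinForm K U} (hB : B.Nondegenerate) (hB' : B.IsRefl)
    {W C : Submodule K V} (hW : B.IsLagrangian W) (π : V →ₗ[K] U)
    (hC : B.orthogonal C ≤ C ⊓ LinearMap.ker π) (hπ : C.map π = ⊤)
    (hπB : ∀ x ∈ C, ∀ y ∈ C, B' (π x) (π y) = B x y) :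
    B'.IsLagrangian ((W ⊓ C).map π) := by
  refine le_antisymm (fun u hu => ?_) ?_
  · obtain ⟨v, hvC, rfl⟩ := (hπ ▸ Submodule.mem_top : u ∈ C.map π)
    have hv : v ∈ B.orthogonal (W ⊓ C) := fun x ⟨hxW, hxC⟩ =>
      hπB x hxC v hvC ▸ hu (π x) ⟨x, ⟨hxW, hxC⟩, rfl⟩
    rw [orthogonal_inf hB hB', hW] at hv
    obtain ⟨w, hw, c, hc, rfl⟩ := Submodule.mem_sup.1 hv
    obtain ⟨hcC, hcπ⟩ := hC hc
    refine ⟨w, ⟨hw, by simpa using C.sub_mem hvC hcC⟩, ?_⟩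
    rw [map_add, LinearMap.mem_ker.1 hcπ, add_zero]
  · rintro _ ⟨x, ⟨hxW, hxC⟩, rfl⟩ _ ⟨y, ⟨hyW, hyC⟩, rfl⟩
    rw [hπB y hyC x hxC]
    exact (hW.symm ▸ hxW : x ∈ B.orthogonal W) y hyW

end Field

end LinearMap.BilinForm

namespace Submodule

variable {R X₁ X₂ L : Type*} [Semiring R] [AddCommMonoid X₁] [Module R X₁] [AddCommMonoid X₂]
  [Module R X₂] [AddCommMonoid L] [Module R L]

def linkConstraint (σ : L →ₗ[R] L) : Submodule R ((X₁ × L) × (X₂ × L)) :=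
  LinearMap.eqLocus (LinearMap.snd R X₂ L ∘ₗ LinearMap.snd R _ _)
    (σ ∘ₗ LinearMap.snd R X₁ L ∘ₗ LinearMap.fst R _ _)

@[simp]
theorem mem_linkConstraint {σ : L →ₗ[R] L} {x : (X₁ × L) × (X₂ × L)} :
    x ∈ linkConstraint σ ↔ x.2.2 = σ x.1.2 := Iff.rfl

def linkComp (σ : L →ₗ[R] L) (W₁ : Submodule R (X₁ × L)) (W₂ : Submodule R (X₂ × L)) :
    Submodule R (X₁ × X₂) :=
  (W₁.prod W₂ ⊓ linkConstraint σ).map ((LinearMap.fst R X₁ L).prodMap (LinearMap.fst R X₂ L))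

theorem mem_linkComp {σ : L →ₗ[R] L} {W₁ : Submodule R (X₁ × L)} {W₂ : Submodule R (X₂ × L)}
    {x : X₁ × X₂} : x ∈ linkComp σ W₁ W₂ ↔ ∃ l, (x.1, l) ∈ W₁ ∧ (x.2, σ l) ∈ W₂ := by
  constructor
  · rintro ⟨⟨⟨x₁, l⟩, ⟨x₂, l'⟩⟩, ⟨⟨h₁, h₂⟩, hl⟩, rfl⟩
    exact ⟨l, h₁, (mem_linkConstraint.1 hl) ▸ h₂⟩
  · rintro ⟨l, h₁, h₂⟩
    exact ⟨((x.1, l), (x.2, σ l)), ⟨⟨h₁, h₂⟩, rfl⟩, rfl⟩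

end Submodule

namespace LinearMap.BilinForm

section CommRing

variable {R X₁ X₂ L : Type*} [CommRing R] [AddCommGroup X₁] [Module R X₁] [AddCommGroup X₂]
  [Module R X₂] [AddCommGroup L] [Module R L]
  {B₁ : BilinForm R X₁} {B₂ : BilinForm R X₂} {B : BilinForm R L} {σ : L ≃ₗ[R] L}

theorem orthogonal_linkConstraint_le (hB₁ : B₁.SeparatingRight) (hB₂ : B₂.SeparatingRight)
    (hB : B.SeparatingRight) (hσ : ∀ l m, B (σ l) (σ m) = -B l m) :
    ((B₁.prod B).prod (B₂.prod B)).orthogonal (Submodule.linkConstraint σ.toLinearMap) ≤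
      Submodule.linkConstraint σ.toLinearMap ⊓
        LinearMap.ker ((LinearMap.fst R X₁ L).prodMap (LinearMap.fst R X₂ L)) := by
  rintro ⟨⟨y₁, m⟩, ⟨y₂, m'⟩⟩ hc
  have hperp : ∀ x₁ x₂ l, B₁ x₁ y₁ + B l m + (B₂ x₂ y₂ + B (σ l) m') = 0 := fun x₁ x₂ l =>
    hc ((x₁, l), (x₂, σ l)) rfl
  have hy₁ : y₁ = 0 := hB₁ y₁ fun x₁ => by simpa using hperp x₁ 0 0
  have hy₂ : y₂ = 0 := hB₂ y₂ fun x₂ => by simpa using hperp 0 x₂ 0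
  have hm : m' - σ m = 0 := hB _ fun l' => by
    obtain ⟨l, rfl⟩ := σ.surjective l'
    have := hperp 0 0 l
    simp only [map_zero, LinearMap.zero_apply, zero_add] at this
    rw [map_sub, hσ, sub_neg_eq_add, add_comm, this]
  simp [hy₁, hy₂, sub_eq_zero.1 hm]

end CommRing

variable {K X₁ X₂ L : Type*} [Field K] [AddCommGroup X₁] [Module K X₁] [AddCommGroup X₂]
  [Module K X₂] [AddCommGroup L] [Module K L] [FiniteDimensional K X₁] [FiniteDimensional K X₂]
  [FiniteDimensional K L]
  {B₁ : BilinForm K X₁} {B₂ : BilinForm K X₂} {B : BilinForm K L} {σ : L ≃ₗ[K] L}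

theorem IsLagrangian.linkComp (hB₁ : B₁.IsSymm) (hB₂ : B₂.IsSymm) (hB : B.IsSymm)
    (hB₁' : B₁.Nondegenerate) (hB₂' : B₂.Nondegenerate) (hB' : B.Nondegenerate)
    (hσ : ∀ l m, B (σ l) (σ m) = -B l m) {W₁ : Submodule K (X₁ × L)}
    {W₂ : Submodule K (X₂ × L)} (hW₁ : (B₁.prod B).IsLagrangian W₁)
    (hW₂ : (B₂.prod B).IsLagrangian W₂) :
    (B₁.prod B₂).IsLagrangian (Submodule.linkComp σ.toLinearMap W₁ W₂) := by
  refine (hW₁.prod hW₂).map_inf ((hB₁'.prod hB').prod (hB₂'.prod hB'))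
    ((hB₁.prod hB).prod (hB₂.prod hB)).isRefl _
    (orthogonal_linkConstraint_le hB₁'.2 hB₂'.2 hB'.2 hσ) ?_ ?_
  · refine eq_top_iff.2 fun x _ => ⟨((x.1, 0), (x.2, 0)), by simp, rfl⟩
  · rintro ⟨⟨x₁, l⟩, ⟨x₂, l'⟩⟩ hx ⟨⟨y₁, m⟩, ⟨y₂, m'⟩⟩ hy
    simp only [Submodule.mem_linkConstraint, LinearEquiv.coe_coe] at hx hy
    simp only [hx, hy, LinearMap.prodMap_apply, LinearMap.coe_fst, prod_apply, hσ]
    abel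

end LinearMap.BilinForm

section PortPairing

variable (R : Type*) [CommRing R]

def powerPairing (ι : Type*) [Fintype ι] : BilinForm R ((ι → R) × (ι → R)) :=
  (dotProductBilin R R).compl₁₂ (LinearMap.snd R _ _) (LinearMap.fst R _ _) +
    (dotProductBilin R R).compl₁₂ (LinearMap.fst R _ _) (LinearMap.snd R _ _)

def sumPortEquiv (α β : Type*) :
    (((α → R) × (α → R)) × ((β → R) × (β → R))) ≃ₗ[R] (α ⊕ β → R) × (α ⊕ β → R) :=
  (LinearEquiv.prodProdProdComm R (α → R) (α → R) (β → R) (β → R)).trans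
    ((LinearEquiv.sumArrowLequivProdArrow α β R R).symm.prodCongr
      (LinearEquiv.sumArrowLequivProdArrow α β R R).symm)

def flowNeg (ι : Type*) : ((ι → R) × (ι → R)) ≃ₗ[R] (ι → R) × (ι → R) :=
  (LinearEquiv.neg R).prodCongr (LinearEquiv.refl R _)

variable {R}

@[simp]
theorem flowNeg_apply {ι : Type*} (p : (ι → R) × (ι → R)) : flowNeg R ι p = (-p.1, p.2) := rfl

variable {ι : Type*} [Fintype ι]

@[simp]
theorem powerPairing_apply (p q : (ι → R) × (ι → R)) :
    powerPairing R ι p q = p.2 ⬝ᵥ q.1 + q.2 ⬝ᵥ p.1 := by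
  simp [powerPairing, dotProduct_comm p.1]

theorem isSymm_powerPairing : (powerPairing R ι).IsSymm :=
  ⟨fun p q => by rw [powerPairing_apply, powerPairing_apply, add_comm]⟩

theorem nondegenerate_powerPairing : (powerPairing R ι).Nondegenerate := by
  refine (LinearMap.IsRefl.nondegenerate_iff_separatingLeft (B := powerPairing R ι)
    isSymm_powerPairing.isRefl).2 fun p hp => Prod.ext ?_ ?_
  · exact dotProduct_eq_zero _ fun w => by simpa [dotProduct_comm] using hp (0, w)
  · exact dotProduct_eq_zero _ fun w => by simpa using hp (w, 0)

@[simp]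
theorem sumPortEquiv_apply {α β : Type*} (x : ((α → R) × (α → R)) × ((β → R) × (β → R))) :
    sumPortEquiv R α β x = (Sum.elim x.1.1 x.2.1, Sum.elim x.1.2 x.2.2) := rfl

@[simp]
theorem sumPortEquiv_symm_apply {α β : Type*} (p : (α ⊕ β → R) × (α ⊕ β → R)) :
    (sumPortEquiv R α β).symm p =
      ((fun i => p.1 (Sum.inl i), fun i => p.2 (Sum.inl i)),
        (fun j => p.1 (Sum.inr j), fun j => p.2 (Sum.inr j))) := rfl

theorem powerPairing_sumPortEquiv {α β : Type*} [Fintype α] [Fintype β] (x y) :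
    powerPairing R (α ⊕ β) (sumPortEquiv R α β x) (sumPortEquiv R α β y) =
      (powerPairing R α).prod (powerPairing R β) x y := by
  simp only [sumPortEquiv_apply, powerPairing_apply, sumElim_dotProduct_sumElim,
    BilinForm.prod_apply]
  abel

theorem powerPairing_flowNeg (p q : (ι → R) × (ι → R)) :
    powerPairing R ι (flowNeg R ι p) (flowNeg R ι q) = -powerPairing R ι p q := by
  simp only [flowNeg_apply, powerPairing_apply, dotProduct_neg, neg_add]

end PortPairing

theorem isDirac_iff {ι : Type} [Fintype ι] {D : Set ((ι → ℝ) × (ι → ℝ))} :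
    IsDirac D ↔
      ∃ W : Submodule ℝ ((ι → ℝ) × (ι → ℝ)), ↑W = D ∧ (powerPairing ℝ ι).IsLagrangian W := by
  have pairing : ∀ (S : Set ((ι → ℝ) × (ι → ℝ))) p,
      (∀ q ∈ S, p.2 ⬝ᵥ q.1 + q.2 ⬝ᵥ p.1 = 0) ↔ ∀ q ∈ S, powerPairing ℝ ι q p = 0 := by
    simp [add_comm]
  constructor
  · intro hD
    set W := (powerPairing ℝ ι).orthogonal (Submodule.span ℝ D) with hW
    have hWD : (W : Set _) = D := by
      ext p
      rw [SetLike.mem_coe, LinearMap.BilinForm.mem_orthogonal_span_iff, hD p, pairing]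
    have hspan : Submodule.span ℝ D = W := hWD ▸ Submodule.span_eq W
    exact ⟨W, hWD, (congrArg (powerPairing ℝ ι).orthogonal hspan.symm).trans hW.symm⟩
  · rintro ⟨W, rfl, hW⟩ p
    rw [pairing, SetLike.mem_coe]
    conv_lhs => rw [← hW]
    exact Iff.rfl

/-- The composition of two Dirac structures `D₁ ⊆ (ℝ^{n₁} × ℝ^ℓ) × (ℝ^{n₁} × ℝ^ℓ)` and
`D₂ ⊆ (ℝ^{n₂} × ℝ^ℓ) × (ℝ^{n₂} × ℝ^ℓ)` through the linking port variables
`(f_link, e_link)` (with `-f_link` on the second system) is again a Dirac structure. -/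
theorem dirac_composition (ℓ n₁ n₂ : ℕ)
    (D₁ : Set (((Fin n₁ ⊕ Fin ℓ) → ℝ) × ((Fin n₁ ⊕ Fin ℓ) → ℝ)))
    (D₂ : Set (((Fin n₂ ⊕ Fin ℓ) → ℝ) × ((Fin n₂ ⊕ Fin ℓ) → ℝ)))
    (h₁ : IsDirac D₁) (h₂ : IsDirac D₂) :
    IsDirac {p : ((Fin n₁ ⊕ Fin n₂) → ℝ) × ((Fin n₁ ⊕ Fin n₂) → ℝ) |
      ∃ flink elink : Fin ℓ → ℝ,
        (Sum.elim (fun i => p.1 (Sum.inl i)) flink,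
          Sum.elim (fun i => p.2 (Sum.inl i)) elink) ∈ D₁ ∧
        (Sum.elim (fun i => p.1 (Sum.inr i)) (-flink),
          Sum.elim (fun i => p.2 (Sum.inr i)) elink) ∈ D₂} := by
  obtain ⟨W₁, rfl, hW₁⟩ := isDirac_iff.1 h₁
  obtain ⟨W₂, rfl, hW₂⟩ := isDirac_iff.1 h₂
  have hW := (LinearMap.BilinForm.IsLagrangian.linkComp
    isSymm_powerPairing isSymm_powerPairing isSymm_powerPairing
    nondegenerate_powerPairing nondegenerate_powerPairing nondegenerate_powerPairing
    powerPairing_flowNeg (hW₁.comap _ powerPairing_sumPortEquiv)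
    (hW₂.comap _ powerPairing_sumPortEquiv)).map _ powerPairing_sumPortEquiv
  refine isDirac_iff.2 ⟨_, ?_, hW⟩
  ext p
  simp only [SetLike.mem_coe, Submodule.mem_map_equiv, Submodule.mem_linkComp,
    Submodule.mem_comap, Prod.exists, LinearEquiv.coe_coe, sumPortEquiv_symm_apply,
    sumPortEquiv_apply, flowNeg_apply, Set.mem_ofPred_eq]
end

section
/- For every ℓ ∈ ℕ, the subspace D_𝓛 := {(−u, i, i, u) ∈ ℝ^{2ℓ} × ℝ^{2ℓ} | u, i ∈ ℝ^ℓ} (flows (−u, i), efforts (i, u)) is a Dirac structure in ℝ^{2ℓ} × ℝ^{2ℓ}. -/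
/-! The flows of the inductance are the symplectic matrix `J` applied to its efforts, and the
graph `f = J e` of any skew-symmetric `J` is a Dirac structure: skew-symmetry makes the pairing
vanish on the graph, and conversely a pair `(f, e)` orthogonal to the graph satisfies
`ê ⬝ᵥ (f - J e) = 0` for every `ê`, in particular for `ê = f - J e`. -/

open Matrix

theorem dotProduct_mulVec_of_transpose_eq_neg {ι : Type*} [Fintype ι] {J : Matrix ι ι ℝ}
    (hJ : Jᵀ = -J) (x y : ι → ℝ) : x ⬝ᵥ J *ᵥ y = -(J *ᵥ x ⬝ᵥ y) := by
  rw [dotProduct_mulVec, ← mulVec_transpose, hJ, neg_mulVec, neg_dotProduct]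

theorem isDirac_setOf_eq_mulVec {ι : Type} [Fintype ι] {J : Matrix ι ι ℝ} (hJ : Jᵀ = -J) :
    IsDirac {p : (ι → ℝ) × (ι → ℝ) | p.1 = J *ᵥ p.2} := by
  rintro ⟨f, e⟩
  have pairing (ê : ι → ℝ) : e ⬝ᵥ J *ᵥ ê + ê ⬝ᵥ f = ê ⬝ᵥ (f - J *ᵥ e) := by
    rw [dotProduct_mulVec_of_transpose_eq_neg hJ, dotProduct_comm (J *ᵥ e), dotProduct_sub]
    ring
  simp only [Set.mem_ofPred_eq, Prod.forall]
  constructor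
  · rintro rfl _ ê rfl
    rw [pairing, sub_self, dotProduct_zero]
  · intro h
    have orthogonal := h _ (f - J *ᵥ e) rfl
    rw [pairing] at orthogonal
    exact sub_eq_zero.mp (dotProduct_self_eq_zero.mp orthogonal)

theorem Matrix.J_mulVec_sum_elim {l : Type*} [Fintype l] [DecidableEq l] (x y : l → ℝ) :
    J l ℝ *ᵥ Sum.elim x y = Sum.elim (-y) x := by
  simp [J, fromBlocks_mulVec, neg_mulVec]

/-- For every `ℓ`, the subspace `D_𝓛 = {(−u, i, i, u) | u, i ∈ ℝ^ℓ}` with flows `(−u, i)`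
and efforts `(i, u)` (the inductance Dirac structure) is a Dirac structure. -/
theorem inductance_dirac (ℓ : ℕ) :
    IsDirac {p : ((Fin ℓ ⊕ Fin ℓ) → ℝ) × ((Fin ℓ ⊕ Fin ℓ) → ℝ) |
      ∃ u i : Fin ℓ → ℝ, p.1 = Sum.elim (-u) i ∧ p.2 = Sum.elim i u} := by
  have graph_of_J : {p : ((Fin ℓ ⊕ Fin ℓ) → ℝ) × ((Fin ℓ ⊕ Fin ℓ) → ℝ) |
      ∃ u i : Fin ℓ → ℝ, p.1 = Sum.elim (-u) i ∧ p.2 = Sum.elim i u} =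
      {p | p.1 = J (Fin ℓ) ℝ *ᵥ p.2} := by
    ext ⟨f, e⟩
    simp only [Set.mem_ofPred_eq]
    constructor
    · rintro ⟨u, i, rfl, rfl⟩
      exact (J_mulVec_sum_elim i u).symm
    · rintro rfl
      refine ⟨e ∘ Sum.inr, e ∘ Sum.inl, ?_, Sum.elim_comp_inl_inr e |>.symm⟩
      rw [← J_mulVec_sum_elim, Sum.elim_comp_inl_inr]
  rw [graph_of_J]
  exact isDirac_setOf_eq_mulVec (J_transpose (Fin ℓ) ℝ)
end

section
/- Let i_S > 0, V_T > 0 and α_R, α_F ∈ (0,1) with α_F·α_R < 1. Define, for (u_BC, u_BE) ∈ ℝ², i_C(u_BC, u_BE) := i_S·(e^{u_BE/V_T} − 1) − (i_S/α_R)·(e^{u_BC/V_T} − 1) and i_E(u_BC, u_BE) := (i_S/α_F)·(e^{u_BE/V_T} − 1) − i_S·(e^{u_BC/V_T} − 1). Then there exists a neighborhood U₀ ⊆ ℝ² of the origin such that for all (u_BC, u_BE) ∈ U₀: u_BC·i_C(u_BC, u_BE) − u_BE·i_E(u_BC, u_BE) ≤ 0. In other words, the Ebers–Moll relation of an NPN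 transistor, restricted to a suitable neighborhood of the origin, is a resistive relation. -/
/-! Write `e^t - 1 = t · g t` with `g = dslope exp 0`, which is continuous at `0` with `g 0 = 1`.
Then the power `u_BC i_C - u_BE i_E` is `-(i_S / V_T)` times the binary quadratic form
`(g x/α_R) u_BC² - (g x + g y) u_BC u_BE + (g y/α_F) u_BE²`, where `x = u_BC/V_T`, `y = u_BE/V_T`.
At the origin its coefficients are those of `u²/α_R - 2 u v + v²/α_F`, which is positive definite
exactly when `α_F α_R < 1`; positive definiteness is an open condition on the coefficients. -/

open Filter Topology

lemma quadratic_nonneg_of_sq_le_mul {K : Type*} [Field K] [LinearOrder K] [IsStrictOrderedRing K]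
    {A B C x y : K} (hA : 0 < A) (hC : C ^ 2 ≤ A * B) :
    0 ≤ A * x ^ 2 - 2 * C * x * y + B * y ^ 2 := by
  have hAQ : A * (A * x ^ 2 - 2 * C * x * y + B * y ^ 2) =
      (A * x - C * y) ^ 2 + (A * B - C ^ 2) * y ^ 2 := by
    ring
  refine nonneg_of_mul_nonneg_right ?_ hA
  rw [hAQ]
  exact add_nonneg (sq_nonneg _) (mul_nonneg (sub_nonneg.2 hC) (sq_nonneg _))

lemma Real.exp_sub_one_eq_mul_dslope (t : ℝ) : Real.exp t - 1 = t * dslope Real.exp 0 t := by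
  simpa using (sub_smul_dslope Real.exp 0 t).symm

lemma Real.tendsto_dslope_exp_zero : Tendsto (dslope Real.exp 0) (𝓝 0) (𝓝 1) := by
  have h := (continuousAt_dslope_same.2 (Real.differentiableAt_exp (x := 0))).tendsto
  rwa [dslope_same, Real.deriv_exp, Real.exp_zero] at h

lemma ebers_moll_power_eq (iS VT αR αF x y u v : ℝ) :
    x * (iS * (y / VT * v) - iS / αR * (x / VT * u)) -
      y * (iS / αF * (y / VT * v) - iS * (x / VT * u)) =
      -(iS / VT) * (u / αR * x ^ 2 - 2 * ((u + v) / 2) * x * y + v / αF * y ^ 2) := by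
  ring

/-- The Ebers–Moll relation of an NPN transistor, with collector current
`i_C = i_S (e^{u_BE/V_T} − 1) − (i_S/α_R)(e^{u_BC/V_T} − 1)` and emitter current
`i_E = (i_S/α_F)(e^{u_BE/V_T} − 1) − i_S (e^{u_BC/V_T} − 1)`, is resistive on a suitable
neighborhood `U₀` of the origin: `u_BC · i_C − u_BE · i_E ≤ 0` on `U₀`. -/
theorem ebers_moll_locally_resistive (iS VT αR αF : ℝ)
    (hiS : 0 < iS) (hVT : 0 < VT)
    (hαR : αR ∈ Set.Ioo (0 : ℝ) 1) (hαF : αF ∈ Set.Ioo (0 : ℝ) 1)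
    (h : αF * αR < 1) :
    ∃ U₀ ∈ nhds ((0, 0) : ℝ × ℝ), ∀ p ∈ U₀,
      p.1 * (iS * (Real.exp (p.2 / VT) - 1) - iS / αR * (Real.exp (p.1 / VT) - 1)) -
      p.2 * (iS / αF * (Real.exp (p.2 / VT) - 1) - iS * (Real.exp (p.1 / VT) - 1)) ≤ 0 := by
  set g := dslope Real.exp 0
  have hscaled (f : ℝ × ℝ → ℝ) (hf : Continuous f) (hf0 : f (0, 0) = 0) :
      Tendsto (fun p ↦ g (f p / VT)) (𝓝 (0, 0)) (𝓝 1) :=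
    Real.tendsto_dslope_exp_zero.comp ((hf.div_const VT).tendsto' _ _ (by simp [hf0]))
  have hu := hscaled Prod.fst continuous_fst rfl
  have hv := hscaled Prod.snd continuous_snd rfl
  have hA : ∀ᶠ p in 𝓝 ((0, 0) : ℝ × ℝ), 0 < g (p.1 / VT) / αR :=
    (hu.div_const αR).eventually_const_lt (one_div_pos.2 hαR.1)
  have hdisc : ∀ᶠ p in 𝓝 ((0, 0) : ℝ × ℝ),
      ((g (p.1 / VT) + g (p.2 / VT)) / 2) ^ 2 < g (p.1 / VT) / αR * (g (p.2 / VT) / αF) := by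
    refine (((hu.add hv).div_const 2).pow 2).eventually_lt
      ((hu.div_const αR).mul (hv.div_const αF)) ?_
    rw [div_mul_div_comm, one_mul, lt_one_div (by norm_num) (mul_pos hαR.1 hαF.1)]
    linarith
  refine eventually_iff_exists_mem.1 ((hA.and hdisc).mono fun p ⟨hpA, hpdisc⟩ ↦ ?_)
  rw [Real.exp_sub_one_eq_mul_dslope, Real.exp_sub_one_eq_mul_dslope, ebers_moll_power_eq]
  exact mul_nonpos_of_nonpos_of_nonneg (neg_nonpos.2 (by positivity))
    (quadratic_nonneg_of_sq_le_mul hpA hpdisc.le)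
end

section
/- Let A_R ∈ ℝ^{k×m_R}, A_L ∈ ℝ^{k×m_L}, A_C ∈ ℝ^{k×m_C}, A_S ∈ ℝ^{k×m_S} be arbitrary matrices, and set m = m_R + m_L + m_C + m_S. Then the set D of all tuples ((j, −u_L, −i_C, −i_R, −i_S), (φ, i_L, u_C, u_R, u_S)) ∈ (ℝ^k × ℝ^m) × (ℝ^k × ℝ^m) satisfying the block equations [I 0 A_C A_R A_S; 0 0 0 0 0; 0 −I 0 0 0; 0 0 0 0 0; 0 0 0 0 0]·(j, −u_L, −i_C, −i_R, −i_S)ᵀ + [0 −A_L 0 0 0; −A_Rᵀ 0 0 I 0; −A_Lᵀ 0 0 0 0; −A_Cᵀ 0 I 0 0; −A_Sᵀ 0 0 0 I]·(φ, i_L, u_C, u_R, u_S)ᵀ = 0 is a Dirac structure in ℝ^{k+m} × ℝ^{k+m}. -/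
open Matrix

/-- The Dirac structure of the port-Hamiltonian RLC circuit model: the set of tuples of
flows `(j, −u_L, −i_C, −i_R, −i_S)` and efforts `(φ, i_L, u_C, u_R, u_S)` satisfying the
block equations
`[I 0 A_C A_R A_S; 0 0 0 0 0; 0 −I 0 0 0; 0 0 0 0 0; 0 0 0 0 0] f +
 [0 −A_L 0 0 0; −A_Rᵀ 0 0 I 0; −A_Lᵀ 0 0 0 0; −A_Cᵀ 0 I 0 0; −A_Sᵀ 0 0 0 I] e = 0`
is a Dirac structure in `ℝ^{k+m} × ℝ^{k+m}` (with `m = m_R + m_L + m_C + m_S`), for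
arbitrary matrices `A_R, A_L, A_C, A_S`. Here the flow vector is written as
`Sum.elim j (Sum.elim fL (Sum.elim fC (Sum.elim fR fS)))` with `fL = −u_L`, `fC = −i_C`,
`fR = −i_R`, `fS = −i_S`, and similarly for the efforts. -/
theorem rlc_circuit_dirac (k mR mL mC mS : ℕ)
    (AR : Matrix (Fin k) (Fin mR) ℝ) (AL : Matrix (Fin k) (Fin mL) ℝ)
    (AC : Matrix (Fin k) (Fin mC) ℝ) (AS : Matrix (Fin k) (Fin mS) ℝ) :
    IsDirac {p : ((Fin k ⊕ Fin mL ⊕ Fin mC ⊕ Fin mR ⊕ Fin mS) → ℝ) ×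
        ((Fin k ⊕ Fin mL ⊕ Fin mC ⊕ Fin mR ⊕ Fin mS) → ℝ) |
      ∃ (j : Fin k → ℝ) (fL : Fin mL → ℝ) (fC : Fin mC → ℝ) (fR : Fin mR → ℝ)
        (fS : Fin mS → ℝ) (φ : Fin k → ℝ) (eL : Fin mL → ℝ) (eC : Fin mC → ℝ)
        (eR : Fin mR → ℝ) (eS : Fin mS → ℝ),
        p.1 = Sum.elim j (Sum.elim fL (Sum.elim fC (Sum.elim fR fS))) ∧
        p.2 = Sum.elim φ (Sum.elim eL (Sum.elim eC (Sum.elim eR eS))) ∧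
        -- row 1: `I·j + A_C·fC + A_R·fR + A_S·fS − A_L·eL = 0`
        j + AC.mulVec fC + AR.mulVec fR + AS.mulVec fS - AL.mulVec eL = 0 ∧
        -- row 2: `−A_Rᵀ·φ + eR = 0`
        -AR.transpose.mulVec φ + eR = 0 ∧
        -- row 3: `−I·fL − A_Lᵀ·φ = 0`
        -fL - AL.transpose.mulVec φ = 0 ∧
        -- row 4: `−A_Cᵀ·φ + eC = 0`
        -AC.transpose.mulVec φ + eC = 0 ∧
        -- row 5: `−A_Sᵀ·φ + eS = 0`
        -AS.transpose.mulVec φ + eS = 0} := by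
  intro p
  constructor
  · rintro ⟨j, fL, fC, fR, fS, φ, eL, eC, eR, eS, hp1, hp2, h1, h2, h3, h4, h5⟩
      q ⟨j', fL', fC', fR', fS', φ', eL', eC', eR', eS', hq1, hq2, h1', h2', h3', h4', h5'⟩
    have hj : j = AL.mulVec eL - AC.mulVec fC - AR.mulVec fR - AS.mulVec fS := by
      linear_combination h1
    have hfL : fL = -(AL.transpose.mulVec φ) := by linear_combination -h3
    have heC : eC = AC.transpose.mulVec φ := by linear_combination h4
    have heR : eR = AR.transpose.mulVec φ := by linear_combination h2
    have heS : eS = AS.transpose.mulVec φ := by linear_combination h5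
    have hj' : j' = AL.mulVec eL' - AC.mulVec fC' - AR.mulVec fR' - AS.mulVec fS' := by
      linear_combination h1'
    have hfL' : fL' = -(AL.transpose.mulVec φ') := by linear_combination -h3'
    have heC' : eC' = AC.transpose.mulVec φ' := by linear_combination h4'
    have heR' : eR' = AR.transpose.mulVec φ' := by linear_combination h2'
    have heS' : eS' = AS.transpose.mulVec φ' := by linear_combination h5'
    subst hj hfL heC heR heS hj' hfL' heC' heR' heS'
    rw [hp1, hp2, hq1, hq2]
    simp only [sumElim_dotProduct_sumElim, Matrix.mulVec_transpose,
      Matrix.dotProduct_mulVec, dotProduct_sub, sub_dotProduct, dotProduct_add,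
      add_dotProduct, dotProduct_neg, neg_dotProduct, dotProduct_comm]
    ring
  · intro h
    set j : Fin k → ℝ := fun i => p.1 (Sum.inl i) with hjdef
    set fL : Fin mL → ℝ := fun i => p.1 (Sum.inr (Sum.inl i)) with hfLdef
    set fC : Fin mC → ℝ := fun i => p.1 (Sum.inr (Sum.inr (Sum.inl i))) with hfCdef
    set fR : Fin mR → ℝ := fun i => p.1 (Sum.inr (Sum.inr (Sum.inr (Sum.inl i)))) with hfRdef
    set fS : Fin mS → ℝ := fun i => p.1 (Sum.inr (Sum.inr (Sum.inr (Sum.inr i)))) with hfSdef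
    set φ : Fin k → ℝ := fun i => p.2 (Sum.inl i) with hφdef
    set eL : Fin mL → ℝ := fun i => p.2 (Sum.inr (Sum.inl i)) with heLdef
    set eC : Fin mC → ℝ := fun i => p.2 (Sum.inr (Sum.inr (Sum.inl i))) with heCdef
    set eR : Fin mR → ℝ := fun i => p.2 (Sum.inr (Sum.inr (Sum.inr (Sum.inl i)))) with heRdef
    set eS : Fin mS → ℝ := fun i => p.2 (Sum.inr (Sum.inr (Sum.inr (Sum.inr i)))) with heSdef
    have hp1 : p.1 = Sum.elim j (Sum.elim fL (Sum.elim fC (Sum.elim fR fS))) := by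
      funext i; rcases i with i | i | i | i | i <;> rfl
    have hp2 : p.2 = Sum.elim φ (Sum.elim eL (Sum.elim eC (Sum.elim eR eS))) := by
      funext i; rcases i with i | i | i | i | i <;> rfl
    -- a general way to extract the pairing with a member of D
    have key : ∀ (φ' : Fin k → ℝ) (eL' : Fin mL → ℝ) (fC' : Fin mC → ℝ)
        (fR' : Fin mR → ℝ) (fS' : Fin mS → ℝ),
        φ ⬝ᵥ (AL *ᵥ eL' - AC *ᵥ fC' - AR *ᵥ fR' - AS *ᵥ fS')
          + eL ⬝ᵥ (-(ALᵀ *ᵥ φ')) + eC ⬝ᵥ fC' + eR ⬝ᵥ fR' + eS ⬝ᵥ fS'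
          + (φ' ⬝ᵥ j + eL' ⬝ᵥ fL + (ACᵀ *ᵥ φ') ⬝ᵥ fC + (ARᵀ *ᵥ φ') ⬝ᵥ fR
            + (ASᵀ *ᵥ φ') ⬝ᵥ fS) = 0 := by
      intro φ' eL' fC' fR' fS'
      have hq := h (Sum.elim (AL *ᵥ eL' - AC *ᵥ fC' - AR *ᵥ fR' - AS *ᵥ fS')
          (Sum.elim (-(ALᵀ *ᵥ φ')) (Sum.elim fC' (Sum.elim fR' fS'))),
          Sum.elim φ' (Sum.elim eL' (Sum.elim (ACᵀ *ᵥ φ') (Sum.elim (ARᵀ *ᵥ φ') (ASᵀ *ᵥ φ')))))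
        ⟨AL *ᵥ eL' - AC *ᵥ fC' - AR *ᵥ fR' - AS *ᵥ fS', -(ALᵀ *ᵥ φ'), fC', fR', fS',
          φ', eL', ACᵀ *ᵥ φ', ARᵀ *ᵥ φ', ASᵀ *ᵥ φ', rfl, rfl,
          by abel, by abel, by abel, by abel, by abel⟩
      rw [hp1, hp2] at hq
      simpa only [sumElim_dotProduct_sumElim, add_assoc] using hq
    refine ⟨j, fL, fC, fR, fS, φ, eL, eC, eR, eS, hp1, hp2, ?_, ?_, ?_, ?_, ?_⟩
    · set v := j + AC *ᵥ fC + AR *ᵥ fR + AS *ᵥ fS - AL *ᵥ eL with hv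
      have hk := key v 0 0 0 0
      have hvv : v ⬝ᵥ v = 0 := by
        nth_rewrite 2 [hv]
        simp only [Matrix.mulVec_zero, Matrix.mulVec_transpose, Matrix.dotProduct_mulVec,
          dotProduct_sub, sub_dotProduct, dotProduct_add, add_dotProduct, dotProduct_neg,
          neg_dotProduct, dotProduct_zero, zero_dotProduct, sub_zero, zero_sub] at hk ⊢
        simp only [dotProduct_comm v j, dotProduct_comm eL] at *
        linarith [hk]
      exact dotProduct_self_eq_zero.mp hvv
    · set v := -(ARᵀ *ᵥ φ) + eR with hv
      have hk := key 0 0 0 v 0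
      have hvv : v ⬝ᵥ v = 0 := by
        nth_rewrite 1 [hv]
        simp only [Matrix.mulVec_zero, Matrix.transpose_zero, Matrix.mulVec_transpose,
          Matrix.dotProduct_mulVec, dotProduct_sub, sub_dotProduct, dotProduct_add,
          add_dotProduct, dotProduct_neg, neg_dotProduct, dotProduct_zero,
          zero_dotProduct, sub_zero, zero_sub, Matrix.vecMul_zero,
          Matrix.zero_mulVec, neg_zero] at hk ⊢
        linarith [hk]
      exact dotProduct_self_eq_zero.mp hvv
    · set v := -fL - ALᵀ *ᵥ φ with hv
      have hk := key 0 v 0 0 0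
      have hvv : v ⬝ᵥ v = 0 := by
        nth_rewrite 1 [hv]
        simp only [Matrix.mulVec_zero, Matrix.mulVec_transpose, Matrix.dotProduct_mulVec,
          dotProduct_sub, sub_dotProduct, dotProduct_add, add_dotProduct, dotProduct_neg,
          neg_dotProduct, dotProduct_zero, zero_dotProduct, sub_zero, zero_sub,
          Matrix.vecMul_zero, Matrix.zero_mulVec, neg_zero] at hk ⊢
        simp only [dotProduct_comm v fL, dotProduct_comm eL] at *
        linarith [hk]
      exact dotProduct_self_eq_zero.mp hvv
    · set v := -(ACᵀ *ᵥ φ) + eC with hv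
      have hk := key 0 0 v 0 0
      have hvv : v ⬝ᵥ v = 0 := by
        nth_rewrite 1 [hv]
        simp only [Matrix.mulVec_zero, Matrix.mulVec_transpose, Matrix.dotProduct_mulVec,
          dotProduct_sub, sub_dotProduct, dotProduct_add, add_dotProduct, dotProduct_neg,
          neg_dotProduct, dotProduct_zero, zero_dotProduct, sub_zero, zero_sub,
          Matrix.vecMul_zero, Matrix.zero_mulVec, neg_zero] at hk ⊢
        linarith [hk]
      exact dotProduct_self_eq_zero.mp hvv
    · set v := -(ASᵀ *ᵥ φ) + eS with hv
      have hk := key 0 0 0 0 v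
      have hvv : v ⬝ᵥ v = 0 := by
        nth_rewrite 1 [hv]
        simp only [Matrix.mulVec_zero, Matrix.mulVec_transpose, Matrix.dotProduct_mulVec,
          dotProduct_sub, sub_dotProduct, dotProduct_add, add_dotProduct, dotProduct_neg,
          neg_dotProduct, dotProduct_zero, zero_dotProduct, sub_zero, zero_sub,
          Matrix.vecMul_zero, Matrix.zero_mulVec, neg_zero] at hk ⊢
        linarith [hk]
      exact dotProduct_self_eq_zero.mp hvv
end

section
/- Let A_R ∈ ℝ^{k×m_R}, A_L ∈ ℝ^{k×m_L}, A_C ∈ ℝ^{k×m_C}, A_S ∈ ℝ^{k×m_S}, let g : ℝ^{m_R} → ℝ^{m_R}, η_L : ℝ^{m_L} → ℝ^{m_L}, η_C : ℝ^{m_C} → ℝ^{m_C} be functions, and let q : ℝ → ℝ^k, ψ_L : ℝ → ℝ^{m_L}, q_C : ℝ → ℝ^{m_C} be differentiable and i_R, i_S, φ, i_L, u_C, u_R, u_S be functions of t of matching dimensions. Then the pH dynamics given by the block equations [I 0 A_C A_R A_S; 0 0 0 0 0; 0 −I 0 0 0; 0 0 0 0 0; 0 0 0 0 0]·(−q'(t),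 −ψ_L'(t), −q_C'(t), −i_R(t), −i_S(t))ᵀ + [0 −A_L 0 0 0; −A_Rᵀ 0 0 I 0; −A_Lᵀ 0 0 0 0; −A_Cᵀ 0 I 0 0; −A_Sᵀ 0 0 0 I]·(φ(t), i_L(t), u_C(t), u_R(t), u_S(t))ᵀ = 0, together with q(t) = 0, i_L(t) = η_L(ψ_L(t)), u_C(t) = η_C(q_C(t)), i_R(t) = g(u_R(t)), hold for all t if, and only if, for all t: A_C·q_C'(t) + A_R·g(A_Rᵀ·φ(t)) + A_L·i_L(t) + A_S·i_S(t) = 0, ψ_L'(t) = A_Lᵀ·φ(t), u_S(t) = A_Sᵀ·φ(t), A_Cᵀ·φ(t) = η_C(q_C(t)), i_L(t) = η_L(ψ_L(t)), together with q(t) = 0, u_R(t) = A_Rᵀ·φ(t), u_C(t) = A_Cᵀ·φ(t), i_R(t) = g(u_R(t)). -/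
open Matrix

/-- The port-Hamiltonian dynamics of an RLC circuit (given by the interconnected Dirac
structure with flows `(−q', −ψ_L', −q_C', −i_R, −i_S)` and efforts
`(φ, i_L, u_C, u_R, u_S)`, the Lagrange submanifold `q = 0`, `i_L = η_L(ψ_L)`,
`u_C = η_C(q_C)` and the resistive relation `i_R = g(u_R)`) are equivalent to the
charge/flux-oriented modified nodal analysis equations. -/
theorem pH_dynamics_iff_MNA (k mR mL mC mS : ℕ)
    (AR : Matrix (Fin k) (Fin mR) ℝ) (AL : Matrix (Fin k) (Fin mL) ℝ)
    (AC : Matrix (Fin k) (Fin mC) ℝ) (AS : Matrix (Fin k) (Fin mS) ℝ)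
    (g : (Fin mR → ℝ) → (Fin mR → ℝ))
    (ηL : (Fin mL → ℝ) → (Fin mL → ℝ)) (ηC : (Fin mC → ℝ) → (Fin mC → ℝ))
    (q : ℝ → Fin k → ℝ) (ψL : ℝ → Fin mL → ℝ) (qC : ℝ → Fin mC → ℝ)
    (hq : Differentiable ℝ q) (hψL : Differentiable ℝ ψL) (hqC : Differentiable ℝ qC)
    (iR : ℝ → Fin mR → ℝ) (iS : ℝ → Fin mS → ℝ) (φ : ℝ → Fin k → ℝ)
    (iL : ℝ → Fin mL → ℝ) (uC : ℝ → Fin mC → ℝ) (uR : ℝ → Fin mR → ℝ)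
    (uS : ℝ → Fin mS → ℝ) :
    (∀ t : ℝ,
      -- block row 1: `I·(−q') + A_C·(−q_C') + A_R·(−i_R) + A_S·(−i_S) − A_L·i_L = 0`
      (-(deriv q t) + AC.mulVec (-(deriv qC t)) + AR.mulVec (-(iR t)) +
        AS.mulVec (-(iS t)) - AL.mulVec (iL t) = 0) ∧
      -- block row 2: `−A_Rᵀ·φ + u_R = 0`
      (-AR.transpose.mulVec (φ t) + uR t = 0) ∧
      -- block row 3: `−I·(−ψ_L') − A_Lᵀ·φ = 0`
      (-(-(deriv ψL t)) - AL.transpose.mulVec (φ t) = 0) ∧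
      -- block row 4: `−A_Cᵀ·φ + u_C = 0`
      (-AC.transpose.mulVec (φ t) + uC t = 0) ∧
      -- block row 5: `−A_Sᵀ·φ + u_S = 0`
      (-AS.transpose.mulVec (φ t) + uS t = 0) ∧
      -- Lagrange submanifold and resistive relation
      q t = 0 ∧ iL t = ηL (ψL t) ∧ uC t = ηC (qC t) ∧ iR t = g (uR t)) ↔
    (∀ t : ℝ,
      -- charge/flux-oriented modified nodal analysis
      AC.mulVec (deriv qC t) + AR.mulVec (g (AR.transpose.mulVec (φ t))) +
        AL.mulVec (iL t) + AS.mulVec (iS t) = 0 ∧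
      deriv ψL t = AL.transpose.mulVec (φ t) ∧
      uS t = AS.transpose.mulVec (φ t) ∧
      AC.transpose.mulVec (φ t) = ηC (qC t) ∧
      iL t = ηL (ψL t) ∧
      q t = 0 ∧
      uR t = AR.transpose.mulVec (φ t) ∧
      uC t = AC.transpose.mulVec (φ t) ∧
      iR t = g (uR t)) := by
  constructor
  · intro h t
    obtain ⟨h1, h2, h3, h4, h5, hq0, hiL, huC, hiR⟩ := h t
    have hqz : q = fun _ => (0 : Fin k → ℝ) := funext fun s => (h s).2.2.2.2.2.1
    have hdq : deriv q t = 0 := by rw [hqz]; simp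
    have huR : uR t = AR.transpose.mulVec (φ t) := by
      have := h2; linear_combination (norm := module) this
    have hiR' : iR t = g (AR.transpose.mulVec (φ t)) := by rw [hiR, huR]
    refine ⟨?_, ?_, ?_, ?_, hiL, hq0, huR, ?_, hiR⟩
    · rw [hdq] at h1
      rw [← hiR']
      simp only [Matrix.mulVec_neg] at h1
      linear_combination (norm := module) -h1
    · rw [neg_neg, sub_eq_zero] at h3; exact h3
    · linear_combination (norm := module) h5
    · rw [← huC]; linear_combination (norm := module) -h4
    · linear_combination (norm := module) h4
  · intro h t
    obtain ⟨h1, h2, h3, h4, hiL, hq0, huR, huC, hiR⟩ := h t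
    have hqz : q = fun _ => (0 : Fin k → ℝ) := funext fun s => (h s).2.2.2.2.2.1
    have hdq : deriv q t = 0 := by rw [hqz]; simp
    refine ⟨?_, ?_, ?_, ?_, ?_, hq0, hiL, ?_, hiR⟩
    · rw [hdq]
      have : iR t = g (AR.transpose.mulVec (φ t)) := by rw [hiR, huR]
      rw [this]
      simp only [Matrix.mulVec_neg]
      linear_combination (norm := module) -h1
    · rw [huR]; simp
    · linear_combination (norm := module) h2
    · rw [huC]; simp
    · rw [h3]; simp
    · rw [huC, h4]
end
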